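/- arXiv:1708.04507 — 2 statements merged into one kernel-verified Lean document; each statement's English description precedes it below -/
import Mathlib

section
/- If e divides n, then the generalized Ramanujan sum c_{e,s} is (n,s)-even: for all m, c_{e,s}(m) = c_{e,s}((m, n^s)_s). -/
/-!
Möbius inversion over the divisors `d` of `e` turns the condition `(j, e^s)_s = 1` into the
conditions `d^s ∣ j`, and the resulting complete exponential sums over `j` give the Hölder-type
formula `c_{e,s}(m) = ∑_{d ∣ e} μ(d) (e/d)^s [(e/d)^s ∣ m]`. This depends on `m` only through
which `c^s` with `c ∣ e` divide `m`, and for `c ∣ n` we have `c^s ∣ m ↔ c^s ∣ (m, n^s)_s`.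
-/

open Finset

/-- The generalized gcd `(a,b)_s`: the largest `s`-th power dividing both `a` and `b`. -/
noncomputable def ggcd (s a b : ℕ) : ℕ :=
  sSup {m : ℕ | (∃ l : ℕ, m = l ^ s) ∧ m ∣ a ∧ m ∣ b}

/-- The generalized Ramanujan sum `c_{r,s}(n)`. -/
noncomputable def crs (s r n : ℕ) : ℂ :=
  ∑ j ∈ Finset.Icc 1 (r ^ s),
    if ggcd s j (r ^ s) = 1 then Complex.exp (2 * Real.pi * Complex.I * n * j / (r ^ s)) else 0

/-- The discrete Fourier transform of an `r^s`-periodic function. -/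
noncomputable def dft (s r : ℕ) (f : ℕ → ℂ) (n : ℕ) : ℂ :=
  ∑ k ∈ Finset.Icc 1 (r ^ s), f k * Complex.exp (-(2 * Real.pi * Complex.I * k * n / (r ^ s)))

/-- A function is `(r,s)`-even if `f(n) = f((n, r^s)_s)` for all `n`. -/
def IsRSEven (s r : ℕ) (f : ℕ → ℂ) : Prop := ∀ n, f n = f (ggcd s n (r ^ s))

open scoped ArithmeticFunction.Moebius

section GeneralizedGcd

variable {s a b : ℕ}

lemma bddAbove_ggcd_set (hb : b ≠ 0) :
    BddAbove {m : ℕ | (∃ l : ℕ, m = l ^ s) ∧ m ∣ a ∧ m ∣ b} :=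
  ⟨b, fun _ hm => Nat.le_of_dvd (Nat.pos_of_ne_zero hb) hm.2.2⟩

lemma ggcd_spec (hb : b ≠ 0) :
    (∃ l : ℕ, ggcd s a b = l ^ s) ∧ ggcd s a b ∣ a ∧ ggcd s a b ∣ b :=
  Nat.sSup_mem (s := {m : ℕ | (∃ l : ℕ, m = l ^ s) ∧ m ∣ a ∧ m ∣ b})
    ⟨1, ⟨1, (one_pow s).symm⟩, one_dvd a, one_dvd b⟩ (bddAbove_ggcd_set hb)

/-- If `ggcd s a b = l ^ s`, then `lcm c l ^ s = lcm (c ^ s) (l ^ s)` is a common `s`-th power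
divisor that is a multiple of `l ^ s`, so maximality forces it to equal `l ^ s`. -/
lemma pow_dvd_ggcd_iff (hb : b ≠ 0) {c : ℕ} : c ^ s ∣ ggcd s a b ↔ c ^ s ∣ a ∧ c ^ s ∣ b := by
  obtain ⟨⟨l, hl⟩, hga, hgb⟩ := ggcd_spec (s := s) (a := a) hb
  refine ⟨fun h => ⟨h.trans hga, h.trans hgb⟩, fun ⟨hca, hcb⟩ => ?_⟩
  have hLa : Nat.lcm c l ^ s ∣ a := Nat.pow_lcm_pow ▸ Nat.lcm_dvd hca (hl ▸ hga)
  have hLb : Nat.lcm c l ^ s ∣ b := Nat.pow_lcm_pow ▸ Nat.lcm_dvd hcb (hl ▸ hgb)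
  have hle : Nat.lcm c l ^ s ≤ ggcd s a b :=
    le_csSup (bddAbove_ggcd_set hb) ⟨⟨_, rfl⟩, hLa, hLb⟩
  have hdvd : ggcd s a b ∣ Nat.lcm c l ^ s := hl ▸ pow_dvd_pow_of_dvd (Nat.dvd_lcm_right c l) s
  have hpos : 0 < Nat.lcm c l ^ s := Nat.pos_of_dvd_of_pos hLb (Nat.pos_of_ne_zero hb)
  rw [← le_antisymm hle (Nat.le_of_dvd hpos hdvd)]
  exact pow_dvd_pow_of_dvd (Nat.dvd_lcm_left c l) s

end GeneralizedGcd

lemma sum_divisors_moebius {R : Type*} [Ring R] (n : ℕ) :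
    ∑ d ∈ n.divisors, (μ d : R) = if n = 1 then 1 else 0 := by
  simpa only [ArithmeticFunction.coe_mul_zeta_apply, ArithmeticFunction.intCoe_apply,
    ArithmeticFunction.one_apply] using
    congrArg (· n) (ArithmeticFunction.coe_moebius_mul_coe_zeta (R := R))

lemma ite_ggcd_pow_eq_one_eq_sum_moebius {R : Type*} [Ring R] {s e : ℕ} (hs : s ≠ 0)
    (he : e ≠ 0) (j : ℕ) :
    (if ggcd s j (e ^ s) = 1 then (1 : R) else 0)
      = ∑ d ∈ e.divisors, if d ^ s ∣ j then (μ d : R) else 0 := by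
  have hes : e ^ s ≠ 0 := pow_ne_zero s he
  obtain ⟨⟨l, hl⟩, -, hge⟩ := ggcd_spec (a := j) hes
  have hle : l ∣ e := (Nat.pow_dvd_pow_iff hs).1 (hl ▸ hge)
  have hdivisors : {d ∈ e.divisors | d ^ s ∣ j} = l.divisors := by
    rw [← Nat.divisors_filter_dvd_of_dvd he hle]
    refine filter_congr fun d hd => ?_
    rw [← Nat.pow_dvd_pow_iff (a := d) (b := l) hs, ← hl, pow_dvd_ggcd_iff hes,
      and_iff_left (pow_dvd_pow_of_dvd (Nat.dvd_of_mem_divisors hd) s)]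
  rw [← sum_filter, hdivisors, sum_divisors_moebius, hl]
  simp only [Nat.pow_eq_one, hs, or_false]

lemma sum_Icc_pow_of_pow_eq_one {R : Type*} [CommRing R] [IsDomain R] [DecidableEq R]
    {x : R} {N : ℕ} (hx : x ^ N = 1) : ∑ j ∈ Icc 1 N, x ^ j = if x = 1 then (N : R) else 0 := by
  split_ifs with h1
  · simp [h1]
  have hshift : ∑ j ∈ Icc 1 N, x ^ j = x * ∑ j ∈ range N, x ^ j := by
    rw [← Ico_add_one_right_eq_Icc, sum_Ico_eq_sum_range, mul_sum]
    simp only [add_tsub_cancel_right, pow_add, pow_one]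
  have hgeom : (∑ j ∈ range N, x ^ j) * (x - 1) = 0 := by rw [geom_sum_mul, hx, sub_self]
  rw [hshift, mul_eq_zero_of_right _ ((mul_eq_zero.1 hgeom).resolve_right (sub_ne_zero.2 h1))]

open Complex in
lemma sum_Icc_exp_eq_ite {N : ℕ} (hN : N ≠ 0) (m : ℕ) :
    ∑ j ∈ Icc 1 N, exp (2 * Real.pi * I * m * j / N) = if N ∣ m then (N : ℂ) else 0 := by
  have hζ := isPrimitiveRoot_exp N hN
  have hterm : ∀ j : ℕ,
      exp (2 * Real.pi * I * m * j / N) = (exp (2 * Real.pi * I / N) ^ m) ^ j := by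
    intro j
    rw [← pow_mul, ← exp_nat_mul]
    congr 1
    push_cast
    ring
  have hpow : (exp (2 * Real.pi * I / N) ^ m) ^ N = 1 := by
    rw [← pow_mul, mul_comm m N, pow_mul, hζ.pow_eq_one, one_pow]
  simp only [hterm, sum_Icc_pow_of_pow_eq_one hpow, hζ.pow_eq_one_iff_dvd]

lemma sum_Icc_mul_filter_dvd {M : Type*} [AddCommMonoid M] (f : ℕ → M) {D : ℕ} (hD : D ≠ 0)
    (C : ℕ) : ∑ j ∈ Icc 1 (D * C) with D ∣ j, f j = ∑ k ∈ Icc 1 C, f (D * k) := by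
  have hmap : {j ∈ Icc 1 (D * C) | D ∣ j} = (Icc 1 C).map ⟨(D * ·), mul_right_injective₀ hD⟩ := by
    ext j
    simp only [mem_filter, mem_Icc, mem_map, Function.Embedding.coeFn_mk]
    constructor
    · rintro ⟨⟨h1, h2⟩, k, rfl⟩
      exact ⟨k, ⟨Nat.pos_of_mul_pos_left h1,
        Nat.le_of_mul_le_mul_left h2 (Nat.pos_of_ne_zero hD)⟩, rfl⟩
    · rintro ⟨k, ⟨hk1, hk2⟩, rfl⟩
      exact ⟨⟨Nat.mul_pos (Nat.pos_of_ne_zero hD) hk1, Nat.mul_le_mul_left D hk2⟩,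
        dvd_mul_right D k⟩
  rw [hmap, sum_map]
  rfl

open Complex in
lemma crs_eq_sum_moebius {s e : ℕ} (hs : s ≠ 0) (he : e ≠ 0) (m : ℕ) :
    crs s e m = ∑ d ∈ e.divisors,
      (μ d : ℂ) * if (e / d) ^ s ∣ m then (((e / d) ^ s : ℕ) : ℂ) else 0 := by
  set ω : ℕ → ℂ := fun j => exp (2 * Real.pi * I * m * j / (e : ℂ) ^ s)
  have hsplit : ∀ j, (if ggcd s j (e ^ s) = 1 then ω j else 0)
      = ∑ d ∈ e.divisors, if d ^ s ∣ j then (μ d : ℂ) * ω j else 0 := by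
    intro j
    rw [← boole_mul, ite_ggcd_pow_eq_one_eq_sum_moebius hs he, sum_mul]
    simp only [ite_mul, zero_mul]
  have hmultiples : ∀ d ∈ e.divisors, ∑ j ∈ Icc 1 (e ^ s) with d ^ s ∣ j, ω j
      = if (e / d) ^ s ∣ m then (((e / d) ^ s : ℕ) : ℂ) else 0 := by
    intro d hd
    obtain ⟨c, rfl⟩ := Nat.dvd_of_mem_divisors hd
    have hd0 : d ≠ 0 := left_ne_zero_of_mul he
    have hc0 : c ≠ 0 := right_ne_zero_of_mul he
    rw [Nat.mul_div_cancel_left c (Nat.pos_of_ne_zero hd0), mul_pow,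
      sum_Icc_mul_filter_dvd ω (pow_ne_zero s hd0), ← sum_Icc_exp_eq_ite (pow_ne_zero s hc0)]
    refine sum_congr rfl fun k _ => congrArg exp ?_
    have : (d : ℂ) ≠ 0 := Nat.cast_ne_zero.2 hd0
    have : (c : ℂ) ≠ 0 := Nat.cast_ne_zero.2 hc0
    push_cast
    field_simp
    ring
  calc crs s e m = ∑ j ∈ Icc 1 (e ^ s), if ggcd s j (e ^ s) = 1 then ω j else 0 := rfl
    _ = ∑ d ∈ e.divisors, ∑ j ∈ Icc 1 (e ^ s), if d ^ s ∣ j then (μ d : ℂ) * ω j else 0 := by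
      simp only [hsplit]
      exact sum_comm
    _ = _ := by
      refine sum_congr rfl fun d hd => ?_
      rw [← sum_filter, ← mul_sum, hmultiples d hd]

lemma crs_congr {s e : ℕ} (hs : s ≠ 0) (he : e ≠ 0) {m m' : ℕ}
    (h : ∀ c, c ∣ e → (c ^ s ∣ m ↔ c ^ s ∣ m')) : crs s e m = crs s e m' := by
  simp only [crs_eq_sum_moebius hs he]
  refine sum_congr rfl fun d hd => ?_
  rw [if_congr (h _ (Nat.div_dvd_of_dvd (Nat.dvd_of_mem_divisors hd))) rfl rfl]

theorem stmt1 (s e n : ℕ) (hs : 0 < s) (hn : 0 < n) (he : e ∣ n) :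
    ∀ m : ℕ, crs s e m = crs s e (ggcd s m (n ^ s)) := by
  intro m
  have hns : n ^ s ≠ 0 := pow_ne_zero s hn.ne'
  refine crs_congr hs.ne' (ne_zero_of_dvd_ne_zero hn.ne' he) fun c hc => ?_
  rw [pow_dvd_ggcd_iff hns, and_iff_left (pow_dvd_pow_of_dvd (hc.trans he) s)]
end

section
/- The DFT of an (r,s)-even function is again (r,s)-even: if f(n) = f((n,r^s)_s) for all n, then f̂(n) = f̂((n,r^s)_s) for all n, where f̂(n) = Σ_{k=1}^{r^s} f(k) exp(-2πikn/r^s). -/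
open Finset

/-!
An `(r,s)`-even `f` satisfies `f k = f (c ^ s)`, where `c ^ s = (k, r^s)_s` and `c ∣ r`. Möbius
inversion of `m ↦ f (m ^ s)` turns this into `f k = ∑_{d ∣ r, d^s ∣ k} h d`, so `f` is a linear
combination of the indicators of the multiples of `d ^ s`, `d ∣ r`. The DFT of such an indicator is
`(r/d)^s` times the indicator of the multiples of `(r/d)^s`, which is again `(r,s)`-even because
`(r/d)^s ∣ n ↔ (r/d)^s ∣ (n, r^s)_s`.
-/

theorem isGreatest_ggcd (s n : ℕ) {N : ℕ} (hN : N ≠ 0) :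
    IsGreatest {m : ℕ | (∃ l : ℕ, m = l ^ s) ∧ m ∣ n ∧ m ∣ N} (ggcd s n N) := by
  refine ⟨Nat.sSup_mem ⟨1, ⟨1, (one_pow s).symm⟩, one_dvd _, one_dvd _⟩ ?_,
    fun _ => le_csSup ?_⟩ <;>
  exact ⟨N, fun m hm => Nat.le_of_dvd (Nat.pos_of_ne_zero hN) hm.2.2⟩

theorem pow_dvd_ggcd_iff_s4 (s n l : ℕ) {N : ℕ} (hN : N ≠ 0) :
    l ^ s ∣ ggcd s n N ↔ l ^ s ∣ n ∧ l ^ s ∣ N := by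
  obtain ⟨⟨⟨c, hc⟩, hgn, hgN⟩, hmax⟩ := isGreatest_ggcd s n hN
  refine ⟨fun h => ⟨h.trans hgn, h.trans hgN⟩, fun ⟨hln, hlN⟩ => ?_⟩
  -- `lcm l c ^ s` is a common `s`-th power divisor that is a multiple of the maximal one.
  have hL : ∀ {m}, l ^ s ∣ m → c ^ s ∣ m → lcm l c ^ s ∣ m := fun hl hc =>
    Nat.pow_lcm_pow ▸ Nat.lcm_dvd hl hc
  have hLN : lcm l c ^ s ∣ N := hL hlN (hc ▸ hgN)
  have heq : lcm l c ^ s = ggcd s n N := by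
    refine le_antisymm (hmax ⟨⟨_, rfl⟩, hL hln (hc ▸ hgn), hLN⟩) (Nat.le_of_dvd ?_ ?_)
    · exact Nat.pos_of_ne_zero fun h => hN (Nat.eq_zero_of_zero_dvd (h ▸ hLN))
    · exact hc ▸ pow_dvd_pow_of_dvd (Nat.dvd_lcm_right l c) s
  exact heq ▸ pow_dvd_pow_of_dvd (Nat.dvd_lcm_left l c) s

theorem exists_ggcd_eq_pow {s r : ℕ} (hs : s ≠ 0) (hr : r ≠ 0) (n : ℕ) :
    ∃ c ≠ 0, ggcd s n (r ^ s) = c ^ s ∧ ∀ d, d ∣ c ↔ d ∣ r ∧ d ^ s ∣ n := by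
  have hN : r ^ s ≠ 0 := pow_ne_zero s hr
  obtain ⟨⟨c, hc⟩, -, hgN⟩ := (isGreatest_ggcd s n hN).1
  refine ⟨c, ?_, hc, fun d => ?_⟩
  · rintro rfl
    exact hN (Nat.eq_zero_of_zero_dvd (by simpa [hc, hs] using hgN))
  · rw [← Nat.pow_dvd_pow_iff hs, ← hc, pow_dvd_ggcd_iff_s4 s n d hN, Nat.pow_dvd_pow_iff hs, and_comm]

theorem sum_Icc_pow_eq_ite {K : Type*} [Field K] [DecidableEq K] {w : K} {M : ℕ} (hw : w ^ M = 1) :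
    ∑ j ∈ Icc 1 M, w ^ j = if w = 1 then (M : K) else 0 := by
  have hshift : ∑ j ∈ Icc 1 M, w ^ j = w * ∑ j ∈ range M, w ^ j := by
    rw [← Ico_add_one_right_eq_Icc, sum_Ico_eq_sum_range, mul_sum]
    simp only [add_tsub_cancel_right, pow_add, pow_one]
  split_ifs with h1
  · simp [h1]
  · rw [hshift, geom_sum_eq h1, hw, sub_self, zero_div, mul_zero]

theorem Complex.exp_neg_two_pi_I_mul_div_eq_one_iff {M : ℕ} (hM : M ≠ 0) (n : ℕ) :
    Complex.exp (-(2 * Real.pi * Complex.I * n / M)) = 1 ↔ M ∣ n := by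
  rw [Complex.exp_neg, inv_eq_one, ← (Complex.isPrimitiveRoot_exp M hM).pow_eq_one_iff_dvd,
    ← Complex.exp_nat_mul]
  ring_nf

theorem sum_exp_neg_two_pi_I_mul_div {M : ℕ} (hM : M ≠ 0) (n : ℕ) :
    ∑ j ∈ Icc 1 M, Complex.exp (-(2 * Real.pi * Complex.I * j * n / M)) =
      if M ∣ n then (M : ℂ) else 0 := by
  set w := Complex.exp (-(2 * Real.pi * Complex.I * n / M))
  have hpow : ∀ j : ℕ, Complex.exp (-(2 * Real.pi * Complex.I * j * n / M)) = w ^ j := by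
    intro j
    rw [← Complex.exp_nat_mul]
    ring_nf
  have hwM : w ^ M = 1 := by
    rw [← hpow]
    convert (Complex.exp_neg_two_pi_I_mul_div_eq_one_iff hM (M * n)).2 (dvd_mul_right M n)
      using 3
    push_cast
    ring
  simp only [hpow, sum_Icc_pow_eq_ite hwM, w, Complex.exp_neg_two_pi_I_mul_div_eq_one_iff hM]

theorem sum_filter_dvd_Icc_mul {β : Type*} [AddCommMonoid β] {a : ℕ} (ha : a ≠ 0) (M : ℕ)
    (g : ℕ → β) : ∑ k ∈ Icc 1 (a * M) with a ∣ k, g k = ∑ j ∈ Icc 1 M, g (a * j) := by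
  have ha' : 0 < a := Nat.pos_of_ne_zero ha
  refine (sum_nbij' (a * ·) (· / a) ?_ ?_ ?_ ?_ fun _ _ => rfl).symm
  · intro j hj
    simp only [mem_Icc, mem_filter] at hj ⊢
    exact ⟨⟨Nat.one_le_iff_ne_zero.2 (mul_ne_zero ha (by omega)), Nat.mul_le_mul_left a hj.2⟩,
      dvd_mul_right a j⟩
  · rintro k hk
    simp only [mem_Icc, mem_filter] at hk ⊢
    obtain ⟨⟨h1, h2⟩, j, rfl⟩ := hk
    rw [Nat.mul_div_cancel_left j ha']
    exact ⟨Nat.one_le_iff_ne_zero.2 (by rintro rfl; simp at h1), Nat.le_of_mul_le_mul_left h2 ha'⟩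
  · intro j _
    exact Nat.mul_div_cancel_left j ha'
  · rintro k hk
    exact Nat.mul_div_cancel' (mem_filter.1 hk).2

def dvdIndicator (m k : ℕ) : ℂ := if m ∣ k then 1 else 0

theorem dft_dvdIndicator {s r m : ℕ} (hm : m ∣ r ^ s) (hN : r ^ s ≠ 0) (n : ℕ) :
    dft s r (dvdIndicator m) n = if r ^ s / m ∣ n then ((r ^ s / m : ℕ) : ℂ) else 0 := by
  obtain ⟨M, hM⟩ := hm
  have hm0 : m ≠ 0 := by rintro rfl; simp_all
  have hM0 : M ≠ 0 := by rintro rfl; simp_all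
  have hrC : (r : ℂ) ^ s = m * M := by exact_mod_cast hM
  rw [dft, hrC, hM, Nat.mul_div_cancel_left M (Nat.pos_of_ne_zero hm0),
    ← sum_exp_neg_two_pi_I_mul_div hM0]
  simp only [dvdIndicator, ite_mul, one_mul, zero_mul]
  rw [← sum_filter, sum_filter_dvd_Icc_mul hm0]
  refine sum_congr rfl fun j _ => ?_
  congr 1
  push_cast
  field_simp

theorem isRSEven_dft_dvdIndicator {s r d : ℕ} (hr : r ≠ 0) (hd : d ∣ r) :
    IsRSEven s r (dft s r (dvdIndicator (d ^ s))) := by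
  have hN : r ^ s ≠ 0 := pow_ne_zero s hr
  have hdN : d ^ s ∣ r ^ s := pow_dvd_pow_of_dvd hd s
  intro n
  rw [dft_dvdIndicator hdN hN, dft_dvdIndicator hdN hN, ← Nat.div_pow hd]
  simp only [pow_dvd_ggcd_iff_s4 s n (r / d) hN,
    and_iff_left (pow_dvd_pow_of_dvd (Nat.div_dvd_of_dvd hd) s)]

theorem dft_sum_mul {ι : Type*} (s r : ℕ) (t : Finset ι) (c : ι → ℂ) (g : ι → ℕ → ℂ) :
    dft s r (fun k => ∑ i ∈ t, c i * g i k) = fun n => ∑ i ∈ t, c i * dft s r (g i) n := by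
  ext n
  simp only [dft, sum_mul, mul_sum, mul_assoc]
  exact sum_comm

theorem isRSEven_sum_mul {ι : Type*} {s r : ℕ} (t : Finset ι) (c : ι → ℂ) {g : ι → ℕ → ℂ}
    (hg : ∀ i ∈ t, IsRSEven s r (g i)) : IsRSEven s r (fun n => ∑ i ∈ t, c i * g i n) :=
  fun n => sum_congr rfl fun i hi => by rw [hg i hi n]

theorem IsRSEven.exists_eq_sum_dvdIndicator {s r : ℕ} (hs : s ≠ 0) (hr : r ≠ 0) {f : ℕ → ℂ}
    (hf : IsRSEven s r f) :
    ∃ h : ℕ → ℂ, f = fun k => ∑ d ∈ r.divisors, h d * dvdIndicator (d ^ s) k := by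
  set h : ℕ → ℂ := fun m => ∑ x ∈ m.divisorsAntidiagonal,
    ((ArithmeticFunction.moebius x.1 : ℤ) : ℂ) * f (x.2 ^ s)
  have hsum : ∀ m > 0, ∑ d ∈ m.divisors, h d = f (m ^ s) :=
    ArithmeticFunction.sum_eq_iff_sum_smul_moebius_eq.2 fun m _ => by simp only [h, zsmul_eq_mul]
  refine ⟨h, funext fun k => ?_⟩
  obtain ⟨c, hc0, hc, hdvd⟩ := exists_ggcd_eq_pow hs hr k
  have hfilter : {d ∈ r.divisors | d ^ s ∣ k} = c.divisors := by
    ext d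
    simp only [mem_filter, Nat.mem_divisors, hdvd]
    tauto
  rw [hf k, hc, ← hsum c (Nat.pos_of_ne_zero hc0), ← hfilter, sum_filter]
  simp only [dvdIndicator, mul_ite, mul_one, mul_zero]

theorem stmt4 (s r : ℕ) (hs : 0 < s) (hr : 0 < r) (f : ℕ → ℂ)
    (hf : IsRSEven s r f) : IsRSEven s r (dft s r f) := by
  obtain ⟨h, rfl⟩ := hf.exists_eq_sum_dvdIndicator hs.ne' hr.ne'
  rw [dft_sum_mul]
  exact isRSEven_sum_mul _ h fun d hd =>
    isRSEven_dft_dvdIndicator hr.ne' (Nat.dvd_of_mem_divisors hd)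
end
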